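/- Let (X, d_X) and (Y, d_Y) be metric spaces equipped with their Borel σ-algebras, let G : X → Y be Borel measurable, and let b : [0,∞) → [0,∞) be monotone non-decreasing with b(0) = 0, satisfying the stability estimate d_X(a₁, a₂) ≤ b(d_Y(G(a₁), G(a₂))) for all a₁, a₂ ∈ X. Let a† ∈ X, let (μ_n) be a sequence of probability measures on X and let (ε_n) be a sequence of positive reals. If (G_*μ_n)({p ∈ Y : d_Y(p, G(a†)) ≤ ε_n}) → 1 as n → ∞, then μ_n({a ∈ X : d_X(a, a†) ≤ b(ε_n)}) → 1 as n → ∞. -/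

import Mathlib

open MeasureTheory Filter Metric

section Stability

variable {X Y : Type*} [PseudoMetricSpace X] [PseudoMetricSpace Y] {G : X → Y} {b : ℝ → ℝ}

theorem preimage_closedBall_subset_closedBall_of_stability
    (hb_mono : MonotoneOn b (Set.Ici 0))
    (hstab : ∀ a₁ a₂ : X, dist a₁ a₂ ≤ b (dist (G a₁) (G a₂))) (a : X) {ε : ℝ} (hε : 0 ≤ ε) :
    G ⁻¹' closedBall (G a) ε ⊆ closedBall a (b ε) := fun x hx =>
  (hstab x a).trans (hb_mono dist_nonneg hε hx)

theorem map_closedBall_le_closedBall_of_stability [MeasurableSpace X] [MeasurableSpace Y]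
    [OpensMeasurableSpace Y] (hG : Measurable G) (hb_mono : MonotoneOn b (Set.Ici 0))
    (hstab : ∀ a₁ a₂ : X, dist a₁ a₂ ≤ b (dist (G a₁) (G a₂))) (μ : Measure X) (a : X)
    {ε : ℝ} (hε : 0 ≤ ε) :
    μ.map G (closedBall (G a) ε) ≤ μ (closedBall a (b ε)) := by
  rw [Measure.map_apply hG isClosed_closedBall.measurableSet]
  exact measure_mono (preimage_closedBall_subset_closedBall_of_stability hb_mono hstab a hε)

end Stability

theorem posterior_consistency_through_stability_general
    {X Y : Type*} [MetricSpace X] [MetricSpace Y]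
    [MeasurableSpace X] [MeasurableSpace Y] [BorelSpace Y]
    (G : X → Y) (hG : Measurable G)
    (b : ℝ → ℝ)
    (hb_mono : MonotoneOn b (Set.Ici (0 : ℝ)))
    (hstab : ∀ a₁ a₂ : X, dist a₁ a₂ ≤ b (dist (G a₁) (G a₂)))
    (adag : X)
    (μ : ℕ → Measure X) (hμ : ∀ n, IsProbabilityMeasure (μ n))
    (ε : ℕ → ℝ) (hε : ∀ n, 0 < ε n)
    (hcons : Tendsto (fun n => ((μ n).map G) {p : Y | dist p (G adag) ≤ ε n})
      atTop (nhds 1)) :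
    Tendsto (fun n => (μ n) {a : X | dist a adag ≤ b (ε n)}) atTop (nhds 1) :=
  tendsto_of_tendsto_of_tendsto_of_le_of_le hcons tendsto_const_nhds
    (fun n => map_closedBall_le_closedBall_of_stability hG hb_mono hstab (μ n) adag (hε n).le)
    fun _ => prob_le_one

/-- A deterministic stability estimate transfers posterior consistency of the
pushforward measures (with rate `ε_n`) to posterior consistency of the original measures
(with rate `b ε_n`). -/
theorem posterior_consistency_through_stability
    {X Y : Type*} [MetricSpace X] [MetricSpace Y]
    [MeasurableSpace X] [BorelSpace X] [MeasurableSpace Y] [BorelSpace Y]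
    (G : X → Y) (hG : Measurable G)
    (b : ℝ → ℝ)
    (hb_nonneg : ∀ x : ℝ, 0 ≤ x → 0 ≤ b x)
    (hb_mono : MonotoneOn b (Set.Ici (0 : ℝ)))
    (hb_zero : b 0 = 0)
    (hstab : ∀ a₁ a₂ : X, dist a₁ a₂ ≤ b (dist (G a₁) (G a₂)))
    (adag : X)
    (μ : ℕ → Measure X) (hμ : ∀ n, IsProbabilityMeasure (μ n))
    (ε : ℕ → ℝ) (hε : ∀ n, 0 < ε n)
    (hcons : Tendsto (fun n => ((μ n).map G) {p : Y | dist p (G adag) ≤ ε n})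
      atTop (nhds 1)) :
    Tendsto (fun n => (μ n) {a : X | dist a adag ≤ b (ε n)}) atTop (nhds 1) :=
  posterior_consistency_through_stability_general G hG b hb_mono hstab adag μ hμ ε hε hcons
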